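/- arXiv:2312.01254 — 3 statements merged into one kernel-verified Lean document; each statement's English description precedes it below -/
import Mathlib

section
/- Let V be a real vector space equipped with a symmetric bilinear form B, let η₀, η₁, η₂ ∈ V be vectors that are NOT linearly independent (for instance, vectors lying in a subspace of dimension at most 2), and let φ₀, φ₁, φ₂ be nonzero real numbers satisfying B(η_i, η_j) = 1 + δ_{ij}/φ_i for all i, j ∈ {0,1,2}. Then φ₀ + φ₁ + φ₂ = −1. -/
/-- If `η₀, η₁, η₂` are not linearly independent in a real vector
space with a symmetric bilinear form `B`, and nonzero reals `φᵢ` satisfy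
`B (η i) (η j) = 1 + δᵢⱼ / φᵢ`, then `φ₀ + φ₁ + φ₂ = -1`. -/
theorem sum_eq_neg_one_of_dependent_normals
    {V : Type*} [AddCommGroup V] [Module ℝ V]
    (B : V →ₗ[ℝ] V →ₗ[ℝ] ℝ) (hBsymm : ∀ x y, B x y = B y x)
    (η : Fin 3 → V) (hdep : ¬ LinearIndependent ℝ η)
    (φ : Fin 3 → ℝ) (hφ : ∀ i, φ i ≠ 0)
    (hB : ∀ i j, B (η i) (η j) = 1 + (if i = j then (1 : ℝ) else 0) / φ i) :
    φ 0 + φ 1 + φ 2 = -1 := by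
  obtain ⟨g, hg, i0, hi0⟩ := Fintype.not_linearIndependent_iff.mp hdep
  rw [Fin.sum_univ_three] at hg
  have hrel : ∀ j : Fin 3,
      g 0 * B (η 0) (η j) + g 1 * B (η 1) (η j) + g 2 * B (η 2) (η j) = 0 := by
    intro j
    have h := congrArg (fun v => B v (η j)) hg
    simpa [map_add, map_smul, smul_eq_mul] using h
  have h0 := hφ 0; have h1 := hφ 1; have h2 := hφ 2
  set S : ℝ := g 0 + g 1 + g 2 with hS
  have e0 := hrel 0; have e1 := hrel 1; have e2 := hrel 2
  simp only [hB, Fin.ext_iff] at e0 e1 e2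
  norm_num at e0 e1 e2
  have k0 : g 0 = -(φ 0 * S) := by
    rw [hS]; field_simp at e0; nlinarith [e0]
  have k1 : g 1 = -(φ 1 * S) := by
    rw [hS]; field_simp at e1; nlinarith [e1]
  have k2 : g 2 = -(φ 2 * S) := by
    rw [hS]; field_simp at e2; nlinarith [e2]
  have key : ∀ j : Fin 3, g j = -(φ j * S) := by
    intro j; fin_cases j <;> assumption
  have hSne : S ≠ 0 := by
    intro hz
    apply hi0
    have := key i0
    rw [hz] at this
    simpa using this
  have hsum : S = -(φ 0 * S) + -(φ 1 * S) + -(φ 2 * S) := by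
    conv_lhs => rw [hS, k0, k1, k2]
  have hmul : S * (φ 0 + φ 1 + φ 2 + 1) = 0 := by nlinarith [hsum]
  rcases mul_eq_zero.mp hmul with h | h
  · exact absurd h hSne
  · linarith
end

section
/- Let V be a real vector space equipped with a symmetric bilinear form B that is anisotropic (i.e., B(w, w) = 0 implies w = 0; for example, B positive definite), let η₀, η₁, η₂ ∈ V, and let φ₀, φ₁, φ₂ be nonzero real numbers satisfying B(η_i, η_j) = 1 + δ_{ij}/φ_i for all i, j ∈ {0,1,2} and φ₀ + φ₁ + φ₂ = −1. Then φ₀η₀ + φ₁η₁ + φ₂η₂ = 0. -/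
/-- If moreover `B` is anisotropic (e.g. positive definite), then
the linear dependency `φ₀ η₀ + φ₁ η₁ + φ₂ η₂ = 0` holds. -/
theorem linear_dependency_of_anisotropic
    {V : Type*} [AddCommGroup V] [Module ℝ V]
    (B : V →ₗ[ℝ] V →ₗ[ℝ] ℝ) (hBsymm : ∀ x y, B x y = B y x)
    (hBanis : ∀ w : V, B w w = 0 → w = 0)
    (η : Fin 3 → V) (φ : Fin 3 → ℝ) (hφ : ∀ i, φ i ≠ 0)
    (hB : ∀ i j, B (η i) (η j) = 1 + (if i = j then (1 : ℝ) else 0) / φ i)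
    (hsum : φ 0 + φ 1 + φ 2 = -1) :
    φ 0 • η 0 + φ 1 • η 1 + φ 2 • η 2 = 0 := by
  apply hBanis
  have h0 := hφ 0
  have h1 := hφ 1
  have h2 := hφ 2
  simp only [map_add, map_smul, LinearMap.add_apply, LinearMap.smul_apply, smul_eq_mul, hB]
  norm_num [Fin.ext_iff]
  field_simp
  ring_nf
  nlinarith [hsum, sq_nonneg (φ 0 + φ 1 + φ 2)]
end

section
/- Let S = {y ∈ ℝ³ : y₀ + y₁ + y₂ = −1 and y₀·y₁·y₂ ≠ 0}, and let ℓ₀ = (0,1,−1) and ℓ₁ = (−1,0,1). Then for all φ, φ̂ ∈ S there exist ψ₁, ψ₂ ∈ S such that each of the three differences ψ₁ − φ, ψ₂ − ψ₁, and φ̂ − ψ₂ is a scalar multiple of ℓ₀ or a scalar multiple of ℓ₁. -/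
/-- Any two points of
`S = {y ∈ ℝ³ : y₀ + y₁ + y₂ = -1, y₀ y₁ y₂ ≠ 0}` are joined by a chain of at
most three steps, each step being a scalar multiple of `ℓ₀ = (0,1,-1)` or
`ℓ₁ = (-1,0,1)`, with the intermediate points in `S`. -/
theorem chain_of_isometric_extensions
    (S : Set (Fin 3 → ℝ))
    (hS : S = {y | y 0 + y 1 + y 2 = -1 ∧ y 0 * y 1 * y 2 ≠ 0})
    (l0 l1 : Fin 3 → ℝ) (hl0 : l0 = ![0, 1, -1]) (hl1 : l1 = ![-1, 0, 1]) :
    ∀ φ ∈ S, ∀ φ' ∈ S, ∃ ψ₁ ∈ S, ∃ ψ₂ ∈ S,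
      ((∃ c : ℝ, ψ₁ - φ = c • l0) ∨ (∃ c : ℝ, ψ₁ - φ = c • l1)) ∧
      ((∃ c : ℝ, ψ₂ - ψ₁ = c • l0) ∨ (∃ c : ℝ, ψ₂ - ψ₁ = c • l1)) ∧
      ((∃ c : ℝ, φ' - ψ₂ = c • l0) ∨ (∃ c : ℝ, φ' - ψ₂ = c • l1)) := by
  subst hS hl0 hl1
  rintro φ ⟨hφs, hφp⟩ φ' ⟨hφ's, hφ'p⟩
  have hφ0 : φ 0 ≠ 0 := fun h => hφp (by rw [h]; ring)
  have hφ'0 : φ' 0 ≠ 0 := fun h => hφ'p (by rw [h]; ring)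
  set s : ℝ := φ 0 - φ' 0 with hs
  set t : ℝ := |(-(φ 1))| + |φ 2| + |φ 2 + s| + 1 with ht
  have h1 : φ 1 + t ≠ 0 := by
    have := abs_nonneg (φ 2); have := abs_nonneg (φ 2 + s)
    have := le_abs_self (-(φ 1))
    nlinarith
  have h2 : φ 2 - t ≠ 0 := by
    have := le_abs_self (φ 2); have := abs_nonneg (φ 2 + s)
    have := abs_nonneg (-(φ 1))
    nlinarith
  have h3 : φ 2 - t + s ≠ 0 := by
    have := le_abs_self (φ 2 + s); have := abs_nonneg (φ 2)
    have := abs_nonneg (-(φ 1))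
    nlinarith
  refine ⟨![φ 0, φ 1 + t, φ 2 - t], ⟨by simp; linarith, by simp; exact ⟨⟨hφ0, h1⟩, h2⟩⟩,
    ![φ' 0, φ 1 + t, φ 2 - t + s], ⟨by simp; linarith, by simp; exact ⟨⟨hφ'0, h1⟩, h3⟩⟩,
    Or.inl ⟨t, ?_⟩, Or.inr ⟨s, ?_⟩, Or.inl ⟨φ' 1 - (φ 1 + t), ?_⟩⟩ <;>
    · funext i
      fin_cases i <;> simp <;> linarith
end
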